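/- Let 𝗇 := ½(m₂ + m₆) and σ := convexHull{0, ½w, 𝗇}. Then for every x ∈ σ: θ[0,0](x) = 0, θ[1,0](x) = [x, u] + ¼[u, u], θ[0,1](x) = [x, v] + ¼[v, v], θ[1,1](x) = −[x, w] + ¼[w, w]; consequently θ[1,0](x) + θ[0,1](x) − θ[1,1](x) = ¼([u, u] + [v, v] − [w, w]) for all x ∈ σ, i.e., the image of σ under the map x ↦ (θ[1,0](x) − θ[0,0](x), θ[0,1](x) − θ[0,0](x), θ[1,1](x) − θ[0,0](x)) lies on the plane T₁ + T₂ − T₃ = ¼([u, u] + [v, v] − [w, w]) in ℝ³. -/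
import Mathlib


/-!
STATEMENT 19: For the hexagonal Voronoi cell of `𝖯 = ℤu + ℤv` (strictly obtuse superbasis
`u, v, w = −u−v`), with `𝗇 := ½(m₂ + m₆)` and `σ := convexHull{0, ½w, 𝗇}`, every `x ∈ σ`
satisfies `θ[0,0](x) = 0`, `θ[1,0](x) = [x,u] + ¼[u,u]`, `θ[0,1](x) = [x,v] + ¼[v,v]`,
`θ[1,1](x) = −[x,w] + ¼[w,w]`; consequently
`θ[1,0](x) + θ[0,1](x) − θ[1,1](x) = ¼([u,u] + [v,v] − [w,w])`, i.e. the image of `σ`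
under `x ↦ (θ[1,0](x) − θ[0,0](x), θ[0,1](x) − θ[0,0](x), θ[1,1](x) − θ[0,0](x))` lies on
the plane `T₁ + T₂ − T₃ = ¼([u,u] + [v,v] − [w,w])` in `ℝ³`.
-/

noncomputable section

/-- The standard inner product on `ℝ × ℝ`. -/
def ip (x y : ℝ × ℝ) : ℝ := x.1 * y.1 + x.2 * y.2

/-- The lattice `ℤu + ℤv` as a subset of `ℝ × ℝ`. -/
def lat (u v : ℝ × ℝ) : Set (ℝ × ℝ) :=
  {p | ∃ m n : ℤ, p = (m : ℝ) • u + (n : ℝ) • v}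

/-- The second-order tropical theta function `θ[j₁,j₂]` of the lattice `ℤu + ℤv`. -/
def theta (u v : ℝ × ℝ) (j₁ j₂ : ℝ) (x : ℝ × ℝ) : ℝ :=
  sInf {t : ℝ | ∃ p ∈ lat u v,
      t = ip (x + p + (j₁ / 2) • u + (j₂ / 2) • v) (x + p + (j₁ / 2) • u + (j₂ / 2) • v)}
    - ip x x

set_option maxHeartbeats 1000000


lemma absk (k : ℤ) : |(k:ℝ)| ≤ (k:ℝ)^2 := by
  rcases eq_or_ne k 0 with h|h
  · simp [h]
  · have h1 : (1:ℝ) ≤ |(k:ℝ)| := by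
      rw [← Int.cast_abs]; exact_mod_cast Int.one_le_abs h
    nlinarith [abs_nonneg ((k:ℝ)), sq_abs ((k:ℝ))]

lemma key_real (p0 p1 p2 A B M N : ℝ)
    (hp0 : 0 ≤ p0) (hp1 : 0 ≤ p1) (hp2 : 0 ≤ p2)
    (hA : |A| ≤ p0 + p2) (hB : |B| ≤ p0 + p1) (hD : |A + B| ≤ p1 + p2)
    (hM : |M| ≤ M^2) (hN : |N| ≤ N^2) (hMN : |M - N| ≤ (M - N)^2) :
    0 ≤ (M-N)^2*p0 + M^2*p2 + N^2*p1 + M*A + N*B := by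
  obtain ⟨hA1, hA2⟩ := abs_le.mp hA
  obtain ⟨hB1, hB2⟩ := abs_le.mp hB
  obtain ⟨hD1, hD2⟩ := abs_le.mp hD
  have hM1 : M ≤ M^2 := le_trans (le_abs_self M) hM
  have hM2 : -M ≤ M^2 := le_trans (neg_le_abs M) hM
  have hN1 : N ≤ N^2 := le_trans (le_abs_self N) hN
  have hN2 : -N ≤ N^2 := le_trans (neg_le_abs N) hN
  have hK1 : M - N ≤ (M-N)^2 := le_trans (le_abs_self _) hMN
  have hK2 : -(M - N) ≤ (M-N)^2 := le_trans (neg_le_abs _) hMN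
  rcases le_total 0 M with hm | hm
  · rcases le_total 0 N with hn | hn
    · rcases le_total N M with h | h
      · -- 0 ≤ N ≤ M
        linarith [mul_nonneg hp0 (by linarith : (0:ℝ) ≤ (M-N)^2 - (M-N)),
          mul_nonneg hp1 (by linarith : (0:ℝ) ≤ N^2 - N),
          mul_nonneg hp2 (by linarith : (0:ℝ) ≤ M^2 - M),
          mul_nonneg (by linarith : (0:ℝ) ≤ M - N) (by linarith : (0:ℝ) ≤ A + (p0+p2)),
          mul_nonneg hn (by linarith : (0:ℝ) ≤ (A+B) + (p1+p2))]
      · -- 0 ≤ M ≤ N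
        linarith [mul_nonneg hp0 (by linarith : (0:ℝ) ≤ (M-N)^2 - (N-M)),
          mul_nonneg hp1 (by linarith : (0:ℝ) ≤ N^2 - N),
          mul_nonneg hp2 (by linarith : (0:ℝ) ≤ M^2 - M),
          mul_nonneg (by linarith : (0:ℝ) ≤ N - M) (by linarith : (0:ℝ) ≤ B + (p0+p1)),
          mul_nonneg hm (by linarith : (0:ℝ) ≤ (A+B) + (p1+p2))]
    · -- N ≤ 0 ≤ M
      linarith [mul_nonneg hp0 (by linarith : (0:ℝ) ≤ (M-N)^2 - (M-N)),
        mul_nonneg hp1 (by linarith : (0:ℝ) ≤ N^2 + N),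
        mul_nonneg hp2 (by linarith : (0:ℝ) ≤ M^2 - M),
        mul_nonneg hm (by linarith : (0:ℝ) ≤ A + (p0+p2)),
        mul_nonneg (by linarith : (0:ℝ) ≤ -N) (by linarith : (0:ℝ) ≤ (p0+p1) - B)]
  · rcases le_total 0 N with hn | hn
    · -- M ≤ 0 ≤ N
      linarith [mul_nonneg hp0 (by linarith : (0:ℝ) ≤ (M-N)^2 - (N-M)),
        mul_nonneg hp1 (by linarith : (0:ℝ) ≤ N^2 - N),
        mul_nonneg hp2 (by linarith : (0:ℝ) ≤ M^2 + M),
        mul_nonneg (by linarith : (0:ℝ) ≤ -M) (by linarith : (0:ℝ) ≤ (p0+p2) - A),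
        mul_nonneg hn (by linarith : (0:ℝ) ≤ B + (p0+p1))]
    · rcases le_total N M with h | h
      · -- N ≤ M ≤ 0
        linarith [mul_nonneg hp0 (by linarith : (0:ℝ) ≤ (M-N)^2 - (M-N)),
          mul_nonneg hp1 (by linarith : (0:ℝ) ≤ N^2 + N),
          mul_nonneg hp2 (by linarith : (0:ℝ) ≤ M^2 + M),
          mul_nonneg (by linarith : (0:ℝ) ≤ M - N) (by linarith : (0:ℝ) ≤ (p0+p1) - B),
          mul_nonneg (by linarith : (0:ℝ) ≤ -M) (by linarith : (0:ℝ) ≤ (p1+p2) - (A+B))]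
      · -- M ≤ N ≤ 0
        linarith [mul_nonneg hp0 (by linarith : (0:ℝ) ≤ (M-N)^2 - (N-M)),
          mul_nonneg hp1 (by linarith : (0:ℝ) ≤ N^2 + N),
          mul_nonneg hp2 (by linarith : (0:ℝ) ≤ M^2 + M),
          mul_nonneg (by linarith : (0:ℝ) ≤ N - M) (by linarith : (0:ℝ) ≤ (p0+p2) - A),
          mul_nonneg (by linarith : (0:ℝ) ≤ -N) (by linarith : (0:ℝ) ≤ (p1+p2) - (A+B))]

lemma theta_val (u v : ℝ × ℝ) (j₁ j₂ : ℝ) (x y : ℝ × ℝ)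
    (hy : y = x + (j₁ / 2) • u + (j₂ / 2) • v)
    (h1 : ip u v ≤ 0) (h2 : 0 ≤ ip u u + ip u v) (h3 : 0 ≤ ip v v + ip u v)
    (hA : |2 * ip y u| ≤ ip u u) (hB : |2 * ip y v| ≤ ip v v)
    (hD : |2 * ip y u + 2 * ip y v| ≤ ip u u + ip v v + 2 * ip u v) :
    theta u v j₁ j₂ x = ip y y - ip x x := by
  have hleast : IsLeast {t : ℝ | ∃ p ∈ lat u v,
      t = ip (x + p + (j₁ / 2) • u + (j₂ / 2) • v) (x + p + (j₁ / 2) • u + (j₂ / 2) • v)}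
      (ip y y) := by
    constructor
    · refine ⟨0, ⟨0, 0, by simp⟩, ?_⟩
      have e : x + 0 + (j₁ / 2) • u + (j₂ / 2) • v = y := by rw [hy]; abel
      rw [e]
    · rintro t ⟨p, ⟨m, n, rfl⟩, rfl⟩
      have e : x + ((m:ℝ) • u + (n:ℝ) • v) + (j₁ / 2) • u + (j₂ / 2) • v
          = y + ((m:ℝ) • u + (n:ℝ) • v) := by rw [hy]; abel
      rw [e]
      have key := key_real (-(ip u v)) (ip v v + ip u v) (ip u u + ip u v)
        (2 * ip y u) (2 * ip y v) (m:ℝ) (n:ℝ)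
        (by linarith) h3 h2
        (by rw [show -(ip u v) + (ip u u + ip u v) = ip u u by ring]; exact hA)
        (by rw [show -(ip u v) + (ip v v + ip u v) = ip v v by ring]; exact hB)
        (by rw [show (ip v v + ip u v) + (ip u u + ip u v) = ip u u + ip v v + 2 * ip u v by ring]; exact hD)
        (absk m) (absk n)
        (by rw [show (m:ℝ) - (n:ℝ) = ((m - n : ℤ) : ℝ) by push_cast; ring]; exact absk (m-n))
      simp only [ip, Prod.fst_add, Prod.snd_add, Prod.smul_fst, Prod.smul_snd,
        smul_eq_mul] at key ⊢
      nlinarith [key]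
  unfold theta
  rw [hleast.csInf_eq]

theorem theta_formulas_on_sigma
    (u v w : ℝ × ℝ) (hw : w = -u - v)
    (huv : ip u v < 0) (huw : ip u w < 0) (hvw : ip v w < 0)
    (m₂ m₆ : ℝ × ℝ)
    (hm₂ : ip m₂ u = ip u u / 2 ∧ ip m₂ v = -(ip v v / 2))
    (hm₆ : ip m₆ u = -(ip u u / 2) ∧ ip m₆ w = ip w w / 2) :
    ∀ x ∈ convexHull ℝ
        ({0, (1 / 2 : ℝ) • w, (1 / 2 : ℝ) • (m₂ + m₆)} : Set (ℝ × ℝ)),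
      (theta u v 0 0 x = 0 ∧
       theta u v 1 0 x = ip x u + ip u u / 4 ∧
       theta u v 0 1 x = ip x v + ip v v / 4 ∧
       theta u v 1 1 x = -ip x w + ip w w / 4) ∧
      theta u v 1 0 x + theta u v 0 1 x - theta u v 1 1 x
        = (ip u u + ip v v - ip w w) / 4 ∧
      (theta u v 1 0 x - theta u v 0 0 x) + (theta u v 0 1 x - theta u v 0 0 x)
          - (theta u v 1 1 x - theta u v 0 0 x)
        = (ip u u + ip v v - ip w w) / 4 := by
  obtain ⟨hm2u, hm2v⟩ := hm₂
  obtain ⟨hm6u, hm6w⟩ := hm₆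
  subst hw
  have Huw : ip u (-u - v) = -(ip u u) - ip u v := by
    simp only [ip, Prod.fst_sub, Prod.snd_sub, Prod.fst_neg, Prod.snd_neg]; ring
  have Hvw : ip v (-u - v) = -(ip u v) - ip v v := by
    simp only [ip, Prod.fst_sub, Prod.snd_sub, Prod.fst_neg, Prod.snd_neg]; ring
  have h1 : ip u v ≤ 0 := le_of_lt huv
  have h2 : 0 ≤ ip u u + ip u v := by rw [Huw] at huw; linarith
  have h3 : 0 ≤ ip v v + ip u v := by rw [Hvw] at hvw; linarith
  intro x hx
  have hxS : x ∈ {z : ℝ × ℝ | -(ip u u + ip u v) ≤ 2 * ip z u ∧ 2 * ip z u ≤ 0 ∧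
      -(ip v v + ip u v) ≤ 2 * ip z v ∧ 2 * ip z v ≤ 0} := by
    refine convexHull_min ?_ ?_ hx
    · have huv' := huv
      have huw' := huw
      have hvw' := hvw
      have hm2u' := hm2u; have hm2v' := hm2v; have hm6u' := hm6u; have hm6w' := hm6w
      simp only [ip, Prod.fst_add, Prod.snd_add, Prod.fst_sub, Prod.snd_sub,
        Prod.fst_neg, Prod.snd_neg] at huv' huw' hvw' hm2u' hm2v' hm6u' hm6w'
      intro z hz
      simp only [Set.mem_insert_iff, Set.mem_singleton_iff] at hz
      rcases hz with rfl | rfl | rfl <;>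
        refine ⟨?_, ?_, ?_, ?_⟩ <;>
        simp only [Set.mem_setOf_eq, ip, Prod.fst_add, Prod.snd_add, Prod.fst_sub,
          Prod.snd_sub, Prod.fst_neg, Prod.snd_neg, Prod.smul_fst, Prod.smul_snd,
          Prod.fst_zero, Prod.snd_zero, smul_eq_mul] <;>
        linarith [huv', huw', hvw', hm2u', hm2v', hm6u', hm6w']
    · intro z1 h1' z2 h2' a b ha hb hab
      obtain ⟨h11, h12, h13, h14⟩ := h1'
      obtain ⟨h21, h22, h23, h24⟩ := h2'
      have e1 : 2 * ip (a • z1 + b • z2) u = a * (2 * ip z1 u) + b * (2 * ip z2 u) := by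
        simp only [ip, Prod.fst_add, Prod.snd_add, Prod.smul_fst, Prod.smul_snd,
          smul_eq_mul]; ring
      have e2 : 2 * ip (a • z1 + b • z2) v = a * (2 * ip z1 v) + b * (2 * ip z2 v) := by
        simp only [ip, Prod.fst_add, Prod.snd_add, Prod.smul_fst, Prod.smul_snd,
          smul_eq_mul]; ring
      have ku : a * (-(ip u u + ip u v)) + b * (-(ip u u + ip u v)) = -(ip u u + ip u v) := by
        rw [← add_mul, hab, one_mul]
      have kv : a * (-(ip v v + ip u v)) + b * (-(ip v v + ip u v)) = -(ip v v + ip u v) := by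
        rw [← add_mul, hab, one_mul]
      refine ⟨?_, ?_, ?_, ?_⟩
      · rw [e1]
        linarith [mul_le_mul_of_nonneg_left h11 ha, mul_le_mul_of_nonneg_left h21 hb, ku]
      · rw [e1]
        have t1 := mul_le_mul_of_nonneg_left h12 ha
        have t2 := mul_le_mul_of_nonneg_left h22 hb
        nlinarith [t1, t2]
      · rw [e2]
        linarith [mul_le_mul_of_nonneg_left h13 ha, mul_le_mul_of_nonneg_left h23 hb, kv]
      · rw [e2]
        have t1 := mul_le_mul_of_nonneg_left h14 ha
        have t2 := mul_le_mul_of_nonneg_left h24 hb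
        nlinarith [t1, t2]
  obtain ⟨s1, s2, s3, s4⟩ := hxS
  -- the four shifted points
  set y1 : ℝ × ℝ := x + ((1:ℝ) / 2) • u + ((0:ℝ) / 2) • v with hy1
  set y2 : ℝ × ℝ := x + ((0:ℝ) / 2) • u + ((1:ℝ) / 2) • v with hy2
  set y3 : ℝ × ℝ := x + ((1:ℝ) / 2) • u + ((1:ℝ) / 2) • v with hy3
  set y0 : ℝ × ℝ := x + ((0:ℝ) / 2) • u + ((0:ℝ) / 2) • v with hy0
  have eA0 : 2 * ip y0 u = 2 * ip x u := by
    simp only [hy0, ip, Prod.fst_add, Prod.snd_add, Prod.smul_fst, Prod.smul_snd, smul_eq_mul]; ring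
  have eB0 : 2 * ip y0 v = 2 * ip x v := by
    simp only [hy0, ip, Prod.fst_add, Prod.snd_add, Prod.smul_fst, Prod.smul_snd, smul_eq_mul]; ring
  have eA1 : 2 * ip y1 u = 2 * ip x u + ip u u := by
    simp only [hy1, ip, Prod.fst_add, Prod.snd_add, Prod.smul_fst, Prod.smul_snd, smul_eq_mul]; ring
  have eB1 : 2 * ip y1 v = 2 * ip x v + ip u v := by
    simp only [hy1, ip, Prod.fst_add, Prod.snd_add, Prod.smul_fst, Prod.smul_snd, smul_eq_mul]; ring
  have eA2 : 2 * ip y2 u = 2 * ip x u + ip u v := by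
    simp only [hy2, ip, Prod.fst_add, Prod.snd_add, Prod.smul_fst, Prod.smul_snd, smul_eq_mul]; ring
  have eB2 : 2 * ip y2 v = 2 * ip x v + ip v v := by
    simp only [hy2, ip, Prod.fst_add, Prod.snd_add, Prod.smul_fst, Prod.smul_snd, smul_eq_mul]; ring
  have eA3 : 2 * ip y3 u = 2 * ip x u + ip u u + ip u v := by
    simp only [hy3, ip, Prod.fst_add, Prod.snd_add, Prod.smul_fst, Prod.smul_snd, smul_eq_mul]; ring
  have eB3 : 2 * ip y3 v = 2 * ip x v + ip v v + ip u v := by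
    simp only [hy3, ip, Prod.fst_add, Prod.snd_add, Prod.smul_fst, Prod.smul_snd, smul_eq_mul]; ring
  have T0 : theta u v 0 0 x = ip y0 y0 - ip x x := by
    refine theta_val u v 0 0 x y0 hy0 h1 h2 h3 ?_ ?_ ?_
    · exact abs_le.mpr ⟨by rw [eA0]; linarith, by rw [eA0]; linarith⟩
    · exact abs_le.mpr ⟨by rw [eB0]; linarith, by rw [eB0]; linarith⟩
    · exact abs_le.mpr ⟨by rw [eA0, eB0]; linarith, by rw [eA0, eB0]; linarith⟩
  have T1 : theta u v 1 0 x = ip y1 y1 - ip x x := by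
    refine theta_val u v 1 0 x y1 hy1 h1 h2 h3 ?_ ?_ ?_
    · exact abs_le.mpr ⟨by rw [eA1]; linarith, by rw [eA1]; linarith⟩
    · exact abs_le.mpr ⟨by rw [eB1]; linarith, by rw [eB1]; linarith⟩
    · exact abs_le.mpr ⟨by rw [eA1, eB1]; linarith, by rw [eA1, eB1]; linarith⟩
  have T2 : theta u v 0 1 x = ip y2 y2 - ip x x := by
    refine theta_val u v 0 1 x y2 hy2 h1 h2 h3 ?_ ?_ ?_
    · exact abs_le.mpr ⟨by rw [eA2]; linarith, by rw [eA2]; linarith⟩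
    · exact abs_le.mpr ⟨by rw [eB2]; linarith, by rw [eB2]; linarith⟩
    · exact abs_le.mpr ⟨by rw [eA2, eB2]; linarith, by rw [eA2, eB2]; linarith⟩
  have T3 : theta u v 1 1 x = ip y3 y3 - ip x x := by
    refine theta_val u v 1 1 x y3 hy3 h1 h2 h3 ?_ ?_ ?_
    · exact abs_le.mpr ⟨by rw [eA3]; linarith, by rw [eA3]; linarith⟩
    · exact abs_le.mpr ⟨by rw [eB3]; linarith, by rw [eB3]; linarith⟩
    · exact abs_le.mpr ⟨by rw [eA3, eB3]; linarith, by rw [eA3, eB3]; linarith⟩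
  have V0 : ip y0 y0 - ip x x = 0 := by
    simp only [hy0, ip, Prod.fst_add, Prod.snd_add, Prod.smul_fst, Prod.smul_snd, smul_eq_mul]; ring
  have V1 : ip y1 y1 - ip x x = ip x u + ip u u / 4 := by
    simp only [hy1, ip, Prod.fst_add, Prod.snd_add, Prod.smul_fst, Prod.smul_snd, smul_eq_mul]; ring
  have V2 : ip y2 y2 - ip x x = ip x v + ip v v / 4 := by
    simp only [hy2, ip, Prod.fst_add, Prod.snd_add, Prod.smul_fst, Prod.smul_snd, smul_eq_mul]; ring
  have V3 : ip y3 y3 - ip x x = -ip x (-u - v) + ip (-u - v) (-u - v) / 4 := by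
    simp only [hy3, ip, Prod.fst_add, Prod.snd_add, Prod.fst_sub, Prod.snd_sub,
      Prod.fst_neg, Prod.snd_neg, Prod.smul_fst, Prod.smul_snd, smul_eq_mul]; ring
  have Vw : ip (-u - v) (-u - v) = ip u u + ip v v + 2 * ip u v := by
    simp only [ip, Prod.fst_sub, Prod.snd_sub, Prod.fst_neg, Prod.snd_neg]; ring
  have Vxw : ip x (-u - v) = -(ip x u) - ip x v := by
    simp only [ip, Prod.fst_sub, Prod.snd_sub, Prod.fst_neg, Prod.snd_neg]; ring
  rw [T0, T1, T2, T3, V0, V1, V2, V3]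
  refine ⟨⟨rfl, rfl, rfl, rfl⟩, ?_, ?_⟩ <;> rw [Vw, Vxw] <;> ring

end
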